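/- Define Vol(z) = Л(arg z) + Л(arg(1/(1-z))) + Л(arg((z-1)/z)) for Im z > 0, where Л is the Lobachevsky function Л(θ) = -∫₀^θ log|2 sin t| dt. Then Vol((1-2k+√3·i)/2) → 0 as k → ∞. -/

import Mathlib

/-!
When `Re z → -∞` while `Im z` tends to a positive limit, the three arguments
`arg z`, `arg (1 / (1 - z))`, `arg ((z - 1) / z)` tend to `π`, `0`, `0`. The Lobachevsky function
is continuous, since `log |2 sin t|` is locally integrable, and it vanishes at `0` and at `π`,
since `∫₀^π log |2 sin t| dt = π log 2 + ∫₀^π log (sin t) dt = 0`.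
-/

open Complex

noncomputable def lob (θ : ℝ) : ℝ := -∫ t in (0:ℝ)..θ, Real.log |2 * Real.sin t|

noncomputable def vol (z : ℂ) : ℝ :=
  lob z.arg + lob (1 / (1 - z)).arg + lob ((z - 1) / z).arg

open Filter Topology
open scoped Real

theorem intervalIntegrable_log_abs_two_mul_sin (a b : ℝ) :
    IntervalIntegrable (fun t => Real.log |2 * Real.sin t|) MeasureTheory.volume a b := by
  have hf : MeromorphicOn (fun t : ℝ => 2 * Real.sin t) (Set.uIcc a b) :=
    (analyticOnNhd_const.mul Real.analyticOnNhd_sin).meromorphicOn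
  simpa only [Real.norm_eq_abs] using hf.intervalIntegrable_log_norm

theorem continuous_lob : Continuous lob :=
  (intervalIntegral.continuous_primitive intervalIntegrable_log_abs_two_mul_sin 0).neg

theorem lob_zero : lob 0 = 0 := by
  simp [lob]

theorem integral_log_abs_two_mul_sin_zero_pi :
    ∫ t in (0:ℝ)..π, Real.log |2 * Real.sin t| = 0 := by
  have hsplit : ∀ t ∈ Set.Ioo 0 π,
      Real.log |2 * Real.sin t| = Real.log 2 + Real.log (Real.sin t) := fun t ht => by
    have hsin := Real.sin_pos_of_pos_of_lt_pi ht.1 ht.2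
    rw [abs_of_pos (by positivity), Real.log_mul two_ne_zero hsin.ne']
  calc ∫ t in (0:ℝ)..π, Real.log |2 * Real.sin t|
      = ∫ t in (0:ℝ)..π, (Real.log 2 + Real.log (Real.sin t)) := by
        simp only [intervalIntegral.integral_of_le Real.pi_pos.le,
          MeasureTheory.integral_Ioc_eq_integral_Ioo]
        exact MeasureTheory.setIntegral_congr_fun measurableSet_Ioo hsplit
    _ = 0 := by
        rw [intervalIntegral.integral_add (g := fun t => Real.log (Real.sin t))
          intervalIntegrable_const intervalIntegrable_log_sin, integral_log_sin_zero_pi]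
        simp only [intervalIntegral.integral_const, sub_zero, smul_eq_mul]
        ring

theorem lob_pi : lob π = 0 := by
  rw [lob, integral_log_abs_two_mul_sin_zero_pi, neg_zero]

namespace Complex

theorem tendsto_sub_one_div_self_cobounded :
    Tendsto (fun z : ℂ => (z - 1) / z) (Bornology.cobounded ℂ) (𝓝 1) := by
  have hinv : Tendsto (fun z : ℂ => 1 - z⁻¹) (Bornology.cobounded ℂ) (𝓝 1) := by
    simpa using (tendsto_const_nhds (x := (1 : ℂ))).sub tendsto_inv₀_cobounded
  refine hinv.congr' ?_
  filter_upwards [Bornology.eventually_ne_cobounded 0] with z hz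
  rw [sub_div, div_self hz, one_div]

variable {α : Type*} {l : Filter α} {w : α → ℂ} {c : ℝ}

theorem tendsto_arg_zero_of_re_tendsto_atTop (hre : Tendsto (fun a => (w a).re) l atTop)
    (him : Tendsto (fun a => (w a).im) l (𝓝 c)) : Tendsto (fun a => arg (w a)) l (𝓝 0) := by
  have hnorm : Tendsto (fun a => ‖w a‖) l atTop :=
    tendsto_atTop_mono (fun a => re_le_norm (w a)) hre
  have harcsin : Tendsto (fun a => Real.arcsin ((w a).im / ‖w a‖)) l (𝓝 0) := by
    rw [← Real.arcsin_zero]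
    exact (Real.continuous_arcsin.tendsto 0).comp (him.div_atTop hnorm)
  refine harcsin.congr' ?_
  filter_upwards [hre.eventually_ge_atTop 0] with a ha
  exact (arg_of_re_nonneg ha).symm

theorem tendsto_arg_pi_of_re_tendsto_atBot (hre : Tendsto (fun a => (w a).re) l atBot)
    (him : Tendsto (fun a => (w a).im) l (𝓝 c)) (hc : 0 < c) :
    Tendsto (fun a => arg (w a)) l (𝓝 π) := by
  have hneg : Tendsto (fun a => arg (-w a) + π) l (𝓝 π) := by
    simpa using (tendsto_arg_zero_of_re_tendsto_atTop (w := fun a => -w a)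
      (by simpa using tendsto_neg_atTop_iff.mpr hre)
      (by simp only [neg_im]; exact him.neg)).add_const π
  refine hneg.congr' ?_
  filter_upwards [him.eventually (lt_mem_nhds hc)] with a ha
  rw [arg_neg_eq_arg_sub_pi_of_im_pos ha, sub_add_cancel]

theorem tendsto_arg_one_div_one_sub_of_re_tendsto_atBot
    (hre : Tendsto (fun a => (w a).re) l atBot) (him : Tendsto (fun a => (w a).im) l (𝓝 c)) :
    Tendsto (fun a => arg (1 / (1 - w a))) l (𝓝 0) := by
  have hre' : Tendsto (fun a => (1 - w a).re) l atTop := by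
    simpa [sub_eq_add_neg] using tendsto_atTop_add_const_left _ 1 (tendsto_neg_atTop_iff.mpr hre)
  have harg : Tendsto (fun a => -arg (1 - w a)) l (𝓝 0) := by
    simpa using (tendsto_arg_zero_of_re_tendsto_atTop (w := fun a => 1 - w a) hre'
      (by simp only [sub_im, one_im, zero_sub]; exact him.neg)).neg
  refine harg.congr' ?_
  filter_upwards [hre'.eventually_gt_atTop 0] with a ha
  rw [one_div, arg_inv, if_neg (fun h => by linarith [(arg_eq_pi_iff.mp h).1])]

end Complex

theorem tendsto_vol_zero_of_re_tendsto_atBot {α : Type*} {l : Filter α} {w : α → ℂ} {c : ℝ}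
    (hre : Tendsto (fun a => (w a).re) l atBot) (him : Tendsto (fun a => (w a).im) l (𝓝 c))
    (hc : 0 < c) : Tendsto (fun a => vol (w a)) l (𝓝 0) := by
  have hw : Tendsto w l (Bornology.cobounded ℂ) :=
    tendsto_norm_atTop_iff_cobounded.mp <| tendsto_atTop_mono
      (fun a => by simpa using re_le_norm (-w a)) (tendsto_neg_atTop_iff.mpr hre)
  have h₁ := (continuous_lob.tendsto π).comp (tendsto_arg_pi_of_re_tendsto_atBot hre him hc)
  have h₂ := (continuous_lob.tendsto 0).comp
    (tendsto_arg_one_div_one_sub_of_re_tendsto_atBot hre him)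
  have harg₃ : Tendsto (fun a => arg ((w a - 1) / w a)) l (𝓝 0) := by
    rw [← arg_one]
    exact (continuousAt_arg (by simp)).tendsto.comp (tendsto_sub_one_div_self_cobounded.comp hw)
  have h₃ := (continuous_lob.tendsto 0).comp harg₃
  simpa [vol, lob_pi, lob_zero] using (h₁.add h₂).add h₃

theorem active_volumes_tendsto_zero :
    Filter.Tendsto (fun k : ℕ => vol ((1 - 2 * (k : ℂ) + Real.sqrt 3 * I) / 2))
      Filter.atTop (nhds 0) := by
  refine tendsto_vol_zero_of_re_tendsto_atBot (c := Real.sqrt 3 / 2) ?_ ?_ (by positivity)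
  · have hk : Tendsto (fun k : ℕ => (1 : ℝ) / 2 + -(k : ℝ)) atTop atBot :=
      tendsto_atBot_add_const_left _ _ (tendsto_neg_atBot_iff.mpr tendsto_natCast_atTop_atTop)
    simpa using hk.congr fun k => by ring
  · simp
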